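/- Let a(n) denote the number of permutations of length n (with a(0) = 1 for the empty permutation) that avoid all three of the patterns 2314, 2413, and 3412. Then the formal power series F(z) = Σ_{n≥0} a(n) z^n over ℚ satisfies the identity (1 + z − 2z(2 − z)·F(z))² = 1 − 6z + 5z² in ℚ[[z]]. -/

import Mathlib

/-- `σ` contains an occurrence of the pattern `π` using only positions in `S`. -/
def ContainsIn {n m : ℕ} (σ : Equiv.Perm (Fin n)) (π : Equiv.Perm (Fin m))
    (S : Set (Fin n)) : Prop :=
  ∃ f : Fin m → Fin n, StrictMono f ∧ (∀ s, f s ∈ S) ∧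
    ∀ s t : Fin m, σ (f s) < σ (f t) ↔ π s < π t

/-- `σ` contains an occurrence of the pattern `π`. -/
def Contains {n m : ℕ} (σ : Equiv.Perm (Fin n)) (π : Equiv.Perm (Fin m)) : Prop :=
  ContainsIn σ π Set.univ

/-- `σ` avoids the pattern `π`. -/
def Avoids {n m : ℕ} (σ : Equiv.Perm (Fin n)) (π : Equiv.Perm (Fin m)) : Prop :=
  ¬ Contains σ π

/-- `σ` lies in the juxtaposition class `Av(P|Q)`: positions split at some cut `k`
(`0 ≤ k ≤ n`), no occurrence of `P` within the first `k` positions and no occurrence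
of `Q` within the remaining positions. -/
def JuxtAv {n p q : ℕ} (P : Equiv.Perm (Fin p)) (Q : Equiv.Perm (Fin q))
    (σ : Equiv.Perm (Fin n)) : Prop :=
  ∃ k ≤ n, ¬ ContainsIn σ P {i : Fin n | (i : ℕ) < k} ∧
    ¬ ContainsIn σ Q {i : Fin n | k ≤ (i : ℕ)}

noncomputable def p2314 : Equiv.Perm (Fin 4) :=
  Equiv.ofBijective (![1,2,0,3] : Fin 4 → Fin 4) (by decide)

noncomputable def p2413 : Equiv.Perm (Fin 4) :=
  Equiv.ofBijective (![1,3,0,2] : Fin 4 → Fin 4) (by decide)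

noncomputable def p3412 : Equiv.Perm (Fin 4) :=
  Equiv.ofBijective (![2,3,0,1] : Fin 4 → Fin 4) (by decide)

noncomputable def F : PowerSeries ℚ :=
  PowerSeries.mk fun n => (Nat.card {σ : Equiv.Perm (Fin n) // Avoids σ p2314 ∧ Avoids σ p2413 ∧ Avoids σ p3412} : ℚ)

/-!
A permutation contains `2314`, `2413` or `3412` exactly when it has an occurrence of `231` followed
by a later entry above its `1`. Removing the minimum entry of an avoider leaves an avoider `τ`, and
the minimum can be put back at position `p` precisely when `p` is the last position or the first
`p` entries of `τ` decrease. So the length `d` of the longest decreasing prefix is a catalytic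
statistic: the children of `τ` have statistics `1, …, d + 1` and, if `d < n`, also `d`. For
`g n u = ∑ u ^ d(σ)` over the avoiders of length `n` this gives
`(u - 1) g (n + 1) = (u² + u - 1) g n - a(n) u - (u - 1) uⁿ`, the last term coming from the
decreasing permutation. At the power series root `U` of the kernel equation `z (u² + u - 1) = u - 1`
the terms `zⁿ g n U` telescope, leaving `(1 - z U) F = 1`; as `z U² = (1 - z)(U - 1)`, this
yields `(2 - z) F = 1 + U`, and the identity is the kernel equation rewritten in terms of `F`.
-/

open Equiv Finset PowerSeries

section Patterns

variable {n : ℕ} {σ : Perm (Fin n)}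

def Contains231Rise (σ : Perm (Fin n)) : Prop :=
  ∃ i j k l : Fin n, i < j ∧ j < k ∧ k < l ∧ σ i < σ j ∧ σ k < σ i ∧ σ k < σ l

instance (σ : Perm (Fin n)) : Decidable (Contains231Rise σ) := by
  unfold Contains231Rise; infer_instance

lemma contains231Rise_of_contains {π : Perm (Fin 4)}
    (hπ : π 0 < π 1 ∧ π 2 < π 0 ∧ π 2 < π 3) (h : Contains σ π) :
    Contains231Rise σ := by
  obtain ⟨f, hf, -, hord⟩ := h
  exact ⟨f 0, f 1, f 2, f 3, hf (by decide), hf (by decide), hf (by decide),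
    (hord 0 1).2 hπ.1, (hord 2 0).2 hπ.2.1, (hord 2 3).2 hπ.2.2⟩

lemma contains_of_forall_lt_imp {m : ℕ} {π : Perm (Fin m)} {f : Fin m → Fin n}
    (hf : StrictMono f) (hord : ∀ s t, π s < π t → σ (f s) < σ (f t)) : Contains σ π := by
  refine ⟨f, hf, fun _ ↦ Set.mem_univ _, fun s t ↦ ⟨fun hst ↦ ?_, hord s t⟩⟩
  rcases lt_trichotomy (π s) (π t) with h | h | h
  · exact h
  · rw [π.injective h] at hst
    exact absurd hst (lt_irrefl _)
  · exact absurd (hord t s h) hst.not_gt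

lemma contains_of_contains231Rise (h : Contains231Rise σ) :
    Contains σ p2314 ∨ Contains σ p2413 ∨ Contains σ p3412 := by
  obtain ⟨i, j, k, l, hij, hjk, hkl, hσij, hσki, hσkl⟩ := h
  have hf : StrictMono ![i, j, k, l] := by
    refine Fin.strictMono_iff_lt_succ.2 fun s ↦ ?_
    fin_cases s <;> assumption
  have hl : σ l ≠ σ i := σ.injective.ne (by order)
  have hl' : σ l ≠ σ j := σ.injective.ne (by order)
  rcases hl.lt_or_gt with hli | hil
  · refine .inr (.inr (contains_of_forall_lt_imp hf fun s t hst ↦ ?_))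
    fin_cases s <;> fin_cases t <;> revert hst <;> simp [p3412] <;> order
  rcases hl'.lt_or_gt with hlj | hjl
  · refine .inr (.inl (contains_of_forall_lt_imp hf fun s t hst ↦ ?_))
    fin_cases s <;> fin_cases t <;> revert hst <;> simp [p2413] <;> order
  · refine .inl (contains_of_forall_lt_imp hf fun s t hst ↦ ?_)
    fin_cases s <;> fin_cases t <;> revert hst <;> simp [p2314] <;> order

lemma avoids_iff_not_contains231Rise :
    (Avoids σ p2314 ∧ Avoids σ p2413 ∧ Avoids σ p3412) ↔ ¬ Contains231Rise σ := by
  refine ⟨fun ⟨h1, h2, h3⟩ h ↦ ?_, fun h ↦ ⟨?_, ?_, ?_⟩⟩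
  · rcases contains_of_contains231Rise h with h' | h' | h'
    exacts [h1 h', h2 h', h3 h']
  all_goals exact fun h' ↦ h (contains231Rise_of_contains (by decide) h')

lemma not_contains231Rise_revPerm : ¬ Contains231Rise (Fin.revPerm : Perm (Fin n)) := by
  rintro ⟨i, j, -, -, hij, -, -, hσ, -, -⟩
  exact (Fin.rev_strictAnti hij).not_gt hσ

end Patterns

section Insertion

variable {n : ℕ} (τ : Perm (Fin n)) (p : Fin (n + 1))

def insertMin : Perm (Fin (n + 1)) :=
  ((finSuccEquiv' p).trans (optionCongr τ)).trans (finSuccEquiv' 0).symm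

@[simp] lemma insertMin_self : insertMin τ p p = 0 := by
  simp [insertMin, finSuccEquiv'_at, finSuccEquiv'_symm_none]

@[simp] lemma insertMin_succAbove (i : Fin n) : insertMin τ p (p.succAbove i) = (τ i).succ := by
  simp [insertMin, finSuccEquiv'_succAbove, finSuccEquiv'_symm_some, Fin.zero_succAbove]

lemma insertMin_castSucc {i : Fin n} (hi : i.castSucc < p) :
    insertMin τ p i.castSucc = (τ i).succ := by
  rw [← insertMin_succAbove, Fin.succAbove_of_castSucc_lt _ _ hi]

lemma insertMin_of_lt {x : Fin (n + 1)} (hx : x < p) :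
    insertMin τ p x = (τ (x.castLT (lt_of_lt_of_le hx (Fin.le_last p)))).succ := by
  rw [← insertMin_castSucc τ p (by simpa using hx), Fin.castSucc_castLT]

lemma insertMin_eq_zero_iff {x : Fin (n + 1)} : insertMin τ p x = 0 ↔ x = p := by
  rw [← insertMin_self τ p, (insertMin τ p).injective.eq_iff]

lemma insertMin_pos_iff {x : Fin (n + 1)} : 0 < insertMin τ p x ↔ x ≠ p := by
  rw [Fin.pos_iff_ne_zero, Ne, insertMin_eq_zero_iff]

lemma insertMin_injective :
    Function.Injective fun x : Perm (Fin n) × Fin (n + 1) ↦ insertMin x.1 x.2 := by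
  rintro ⟨τ, p⟩ ⟨τ', p'⟩ h
  have hp : p' = p := by
    rw [← insertMin_eq_zero_iff τ p, show insertMin τ p = insertMin τ' p' from h,
      insertMin_self]
  subst hp
  have hτ : τ = τ' := Equiv.ext fun i ↦ Fin.succ_injective _ <| by
    simpa using congrArg (fun σ : Perm (Fin (n + 1)) ↦ σ (p'.succAbove i)) h
  rw [hτ]

lemma insertMin_bijective :
    Function.Bijective fun x : Perm (Fin n) × Fin (n + 1) ↦ insertMin x.1 x.2 := by
  rw [Fintype.bijective_iff_injective_and_card]
  refine ⟨insertMin_injective, ?_⟩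
  simp [Fintype.card_perm, Nat.factorial_succ, mul_comm]

lemma sum_perm_succ {M : Type*} [AddCommMonoid M] (f : Perm (Fin (n + 1)) → M) :
    ∑ σ, f σ = ∑ τ : Perm (Fin n), ∑ p, f (insertMin τ p) := by
  rw [← Fintype.sum_prod_type']
  exact (Fintype.sum_bijective _ insertMin_bijective _ _ fun _ ↦ rfl).symm

end Insertion

section DecreasingPrefix

variable {n : ℕ}

def DecreasingPrefix (σ : Perm (Fin n)) (c : ℕ) : Prop :=
  StrictAntiOn σ {i | (i : ℕ) < c}

instance (σ : Perm (Fin n)) (c : ℕ) : Decidable (DecreasingPrefix σ c) := by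
  unfold DecreasingPrefix StrictAntiOn; infer_instance

lemma DecreasingPrefix.mono {σ : Perm (Fin n)} {c c' : ℕ} (h : DecreasingPrefix σ c')
    (hc : c ≤ c') : DecreasingPrefix σ c :=
  StrictAntiOn.mono h fun _ hi ↦ lt_of_lt_of_le hi hc

def decPrefixLen (σ : Perm (Fin n)) : ℕ :=
  Nat.findGreatest (DecreasingPrefix σ) n

variable {σ : Perm (Fin n)}

lemma decPrefixLen_le : decPrefixLen σ ≤ n := Nat.findGreatest_le n

lemma le_decPrefixLen_iff {c : ℕ} (hc : c ≤ n) :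
    c ≤ decPrefixLen σ ↔ DecreasingPrefix σ c := by
  refine ⟨fun h ↦ DecreasingPrefix.mono (Nat.findGreatest_spec (Nat.zero_le n) ?_) h,
    Nat.le_findGreatest hc⟩
  exact fun _ hi ↦ absurd hi (Nat.not_lt_zero _)

lemma decPrefixLen_eq_of_forall {e : ℕ} (he : e ≤ n)
    (h : ∀ c ≤ n, DecreasingPrefix σ c ↔ c ≤ e) : decPrefixLen σ = e :=
  le_antisymm ((h _ decPrefixLen_le).1 ((le_decPrefixLen_iff decPrefixLen_le).1 le_rfl))
    ((le_decPrefixLen_iff he).2 ((h e he).2 le_rfl))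

lemma decPrefixLen_eq_iff : decPrefixLen σ = n ↔ σ = Fin.revPerm := by
  rw [← decPrefixLen_le.ge_iff_eq, le_decPrefixLen_iff le_rfl, DecreasingPrefix]
  simp only [Fin.is_lt, Set.ofPred_true, strictAntiOn_univ]
  refine ⟨fun h ↦ Equiv.ext fun x ↦ ?_, fun h ↦ h ▸ Fin.rev_strictAnti⟩
  simpa using congrFun (StrictAnti.comp h Fin.rev_strictAnti).eq_id x.rev

end DecreasingPrefix

section InsertMinStatistics

variable {n : ℕ} (τ : Perm (Fin n)) (p : Fin (n + 1))

lemma decreasingPrefix_insertMin_iff {c : ℕ} (hc : c ≤ n + 1) :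
    DecreasingPrefix (insertMin τ p) c ↔ c ≤ p + 1 ∧ DecreasingPrefix τ (min c p) := by
  constructor
  · intro h
    have hcp : c ≤ p + 1 := by
      by_contra! hpc
      have hlt := @h p (show (p : ℕ) < c by omega) ⟨p + 1, by omega⟩
        (show (p : ℕ) + 1 < c by omega) (Fin.lt_def.2 (Nat.lt_succ_self _))
      simp at hlt
    refine ⟨hcp, fun i hi j hj hij ↦ ?_⟩
    simp only [Set.mem_ofPred_eq, lt_min_iff] at hi hj
    have hjp : j.castSucc < p := by simpa [Fin.lt_def] using hj.2
    have := @h i.castSucc (by simpa using hi.1) j.castSucc (by simpa using hj.1)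
      (Fin.castSucc_lt_castSucc_iff.2 hij)
    have hip := (Fin.castSucc_lt_castSucc_iff.2 hij).trans hjp
    rwa [insertMin_castSucc _ _ hjp, insertMin_castSucc _ _ hip, Fin.succ_lt_succ_iff] at this
  · rintro ⟨hcp, hτ⟩ x hx y hy hxy
    simp only [Set.mem_ofPred_eq] at hx hy
    rcases eq_or_ne y p with rfl | hyp
    · rw [insertMin_self]
      exact (insertMin_pos_iff _ _).2 hxy.ne
    have hyp' : y < p := lt_of_le_of_ne (by rw [Fin.le_def]; omega) hyp
    have hxp := hxy.trans hyp'
    rw [insertMin_of_lt _ _ hxp, insertMin_of_lt _ _ hyp', Fin.succ_lt_succ_iff]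
    rw [Fin.lt_def] at hxp hyp'
    exact hτ (show (x : ℕ) < min c p by omega) (show (y : ℕ) < min c p by omega) hxy

lemma decPrefixLen_insertMin :
    decPrefixLen (insertMin τ p) =
      if (p : ℕ) ≤ decPrefixLen τ then (p : ℕ) + 1 else decPrefixLen τ := by
  have hp := p.is_le
  have hd : decPrefixLen τ ≤ n := decPrefixLen_le
  split_ifs with h
  · refine decPrefixLen_eq_of_forall (by omega) fun c hc ↦ ?_
    have hτ : DecreasingPrefix τ (min c p) :=
      ((le_decPrefixLen_iff hp).1 h).mono (min_le_right _ _)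
    simp [decreasingPrefix_insertMin_iff τ p hc, hτ]
  · refine decPrefixLen_eq_of_forall (by omega) fun c hc ↦ ?_
    rw [decreasingPrefix_insertMin_iff τ p hc, ← le_decPrefixLen_iff (by omega)]
    omega

lemma contains231Rise_insertMin_iff :
    Contains231Rise (insertMin τ p) ↔
      Contains231Rise τ ∨ ((p : ℕ) < n ∧ ¬ DecreasingPrefix τ p) := by
  constructor
  · rintro ⟨a, b, c, d, hab, hbc, hcd, hσab, hσca, hσcd⟩
    have hap : a ≠ p := by rintro rfl; simp at hσca
    have hbp : b ≠ p := by rintro rfl; simp at hσab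
    have hdp : d ≠ p := by rintro rfl; simp at hσcd
    rcases eq_or_ne c p with rfl | hcp
    · refine .inr ⟨by have := d.is_le; rw [Fin.lt_def] at hcd; omega, fun hdec ↦ ?_⟩
      rw [insertMin_of_lt _ _ (hab.trans hbc), insertMin_of_lt _ _ hbc,
        Fin.succ_lt_succ_iff] at hσab
      have hbc' := Fin.lt_def.1 hbc
      exact (hdec (show (a : ℕ) < c by omega) (show (b : ℕ) < c by omega) hab).not_gt hσab
    · obtain ⟨i, rfl⟩ := Fin.exists_succAbove_eq hap
      obtain ⟨j, rfl⟩ := Fin.exists_succAbove_eq hbp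
      obtain ⟨k, rfl⟩ := Fin.exists_succAbove_eq hcp
      obtain ⟨l, rfl⟩ := Fin.exists_succAbove_eq hdp
      simp only [insertMin_succAbove, Fin.succ_lt_succ_iff, Fin.succAbove_lt_succAbove_iff]
        at hab hbc hcd hσab hσca hσcd
      exact .inl ⟨i, j, k, l, hab, hbc, hcd, hσab, hσca, hσcd⟩
  · rintro (⟨i, j, k, l, hij, hjk, hkl, h1, h2, h3⟩ | ⟨hpn, hdec⟩)
    · exact ⟨p.succAbove i, p.succAbove j, p.succAbove k, p.succAbove l,
        by simpa, by simpa, by simpa, by simpa, by simpa, by simpa⟩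
    · simp only [DecreasingPrefix, StrictAntiOn, not_forall, not_lt, Set.mem_ofPred_eq] at hdec
      obtain ⟨i, hi, j, hj, hij, hτ⟩ := hdec
      have hip : i.castSucc < p := by simpa [Fin.lt_def] using hi
      have hjp : j.castSucc < p := by simpa [Fin.lt_def] using hj
      have hpq : p < ⟨p + 1, by omega⟩ := Fin.lt_def.2 (Nat.lt_succ_self _)
      refine ⟨i.castSucc, j.castSucc, p, ⟨p + 1, by omega⟩, by simpa, hjp, hpq, ?_, ?_, ?_⟩
      · rw [insertMin_castSucc _ _ hip, insertMin_castSucc _ _ hjp, Fin.succ_lt_succ_iff]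
        exact lt_of_le_of_ne hτ (τ.injective.ne hij.ne)
      · simp [insertMin_castSucc _ _ hip]
      · simpa using (insertMin_pos_iff τ p).2 hpq.ne'

end InsertMinStatistics

section Weights

variable {R : Type*} [CommRing R] (u : R) {n : ℕ}

def prefixWeight (σ : Perm (Fin n)) : R :=
  if Contains231Rise σ then 0 else u ^ decPrefixLen σ

lemma sum_prefixWeight_insertMin {τ : Perm (Fin n)} (hτ : ¬ Contains231Rise τ) :
    ∑ p, prefixWeight u (insertMin τ p) =
      ∑ c ∈ range (decPrefixLen τ + 1), u ^ (c + 1) +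
        if decPrefixLen τ < n then u ^ decPrefixLen τ else 0 := by
  have hd : decPrefixLen τ ≤ n := decPrefixLen_le
  have hterm (p : Fin (n + 1)) : prefixWeight u (insertMin τ p) =
      (if (p : ℕ) ≤ decPrefixLen τ then u ^ ((p : ℕ) + 1) else 0) +
        if (p : ℕ) = n then (if decPrefixLen τ < n then u ^ decPrefixLen τ else 0) else 0 := by
    have hp := p.is_le
    simp only [prefixWeight, contains231Rise_insertMin_iff, decPrefixLen_insertMin,
      ← le_decPrefixLen_iff hp, hτ, false_or]
    split_ifs <;> first | omega | ring
  rw [Fintype.sum_congr _ _ hterm, Fin.sum_univ_eq_sum_range (fun c ↦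
      (if c ≤ decPrefixLen τ then u ^ (c + 1) else 0) +
        if c = n then (if decPrefixLen τ < n then u ^ decPrefixLen τ else 0) else 0),
    sum_add_distrib, sum_ite_eq', if_pos (self_mem_range_succ n), ← sum_filter]
  congr 2
  ext c
  simp only [mem_filter, mem_range]
  omega

lemma mul_sum_prefixWeight_insertMin (τ : Perm (Fin n)) :
    (u - 1) * ∑ p, prefixWeight u (insertMin τ p) =
      (u ^ 2 + u - 1) * prefixWeight u τ - (if Contains231Rise τ then 0 else u) -
        if τ = Fin.revPerm then (u - 1) * u ^ n else 0 := by
  by_cases hτ : Contains231Rise τ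
  · have hrev : τ ≠ Fin.revPerm := fun h ↦ not_contains231Rise_revPerm (h ▸ hτ)
    simp [prefixWeight, contains231Rise_insertMin_iff, hτ, hrev]
  rw [sum_prefixWeight_insertMin u hτ, prefixWeight, if_neg hτ, if_neg hτ]
  have hgeom : (u - 1) * ∑ c ∈ range (decPrefixLen τ + 1), u ^ (c + 1) =
      u ^ (decPrefixLen τ + 2) - u := by
    simp_rw [pow_succ, ← sum_mul]
    linear_combination u * geom_sum_mul u (decPrefixLen τ + 1)
  rcases decPrefixLen_le.lt_or_eq with hd | hd
  · have hrev : τ ≠ Fin.revPerm := fun h ↦ hd.ne (decPrefixLen_eq_iff.2 h)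
    rw [if_pos hd, if_neg hrev]
    linear_combination hgeom
  · rw [if_neg hd.not_lt, if_pos (decPrefixLen_eq_iff.1 hd), hd]
    rw [hd] at hgeom
    linear_combination hgeom

def prefixWeightSum (n : ℕ) : R := ∑ σ : Perm (Fin n), prefixWeight u σ

def avoiderCount (n : ℕ) : ℕ := #{σ : Perm (Fin n) | ¬ Contains231Rise σ}

lemma prefixWeightSum_zero : prefixWeightSum u 0 = 1 := by
  simp [prefixWeightSum, prefixWeight, Contains231Rise, decPrefixLen]

lemma prefixWeightSum_succ (n : ℕ) :
    (u - 1) * prefixWeightSum u (n + 1) =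
      (u ^ 2 + u - 1) * prefixWeightSum u n - avoiderCount n * u - (u - 1) * u ^ n := by
  have hcount :
      ∑ τ : Perm (Fin n), (if Contains231Rise τ then 0 else u) = avoiderCount n * u := by
    rw [sum_ite, sum_const_zero, zero_add, sum_const, nsmul_eq_mul, avoiderCount]
  rw [prefixWeightSum, sum_perm_succ, mul_sum,
    Fintype.sum_congr _ _ (mul_sum_prefixWeight_insertMin u),
    sum_sub_distrib, sum_sub_distrib, ← mul_sum, hcount, sum_ite_eq' univ, if_pos (mem_univ _),
    prefixWeightSum]

end Weights

-- The coefficientwise form of `X * (U ^ 2 + U - 1) = U - 1` with `U 0 = 1`.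
def kernelRootCoeff : ℕ → ℚ
  | 0 => 1
  | k + 1 => ∑ i : Fin (k + 1), kernelRootCoeff i * kernelRootCoeff (k - i) +
      kernelRootCoeff k - if k = 0 then 1 else 0

noncomputable def kernelRoot : ℚ⟦X⟧ := mk kernelRootCoeff

lemma X_mul_kernelRoot : X * (kernelRoot ^ 2 + kernelRoot - 1) = kernelRoot - 1 := by
  ext (_ | k)
  · simp [kernelRoot, kernelRootCoeff]
  · rw [coeff_succ_X_mul, map_sub, map_add, pow_two, coeff_mul,
      Finset.Nat.sum_antidiagonal_eq_sum_range_succ_mk]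
    simp [kernelRoot, kernelRootCoeff, coeff_one, Fin.sum_univ_eq_sum_range
      (fun i ↦ kernelRootCoeff i * kernelRootCoeff (k - i))]

lemma coeff_F (n : ℕ) : coeff n F = avoiderCount n := by
  rw [F, coeff_mk,
    Nat.card_congr (Equiv.subtypeEquivRight fun _ ↦ avoids_iff_not_contains231Rise),
    Nat.card_eq_fintype_card, Fintype.card_subtype, avoiderCount]

lemma kernelRoot_telescope (M : ℕ) :
    (kernelRoot - 1) * (X ^ M * prefixWeightSum kernelRoot M - 1) =
      -(X * kernelRoot) * (trunc M F : ℚ⟦X⟧) -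
        X * (kernelRoot - 1) * ∑ m ∈ range M, (X * kernelRoot) ^ m := by
  induction M with
  | zero => simp [prefixWeightSum_zero]
  | succ M ih =>
    have hrec := prefixWeightSum_succ kernelRoot M
    rw [trunc_succ, Polynomial.coe_add, Polynomial.coe_monomial, monomial_eq_C_mul_X_pow,
      coeff_F, map_natCast, sum_range_succ]
    linear_combination
      ih + X ^ (M + 1) * hrec + X ^ M * prefixWeightSum kernelRoot M * X_mul_kernelRoot

lemma X_pow_dvd_kernel_defect (M : ℕ) :
    X ^ M ∣ (1 - X * kernelRoot) * (kernelRoot - 1 - X * kernelRoot * F) -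
      X * (kernelRoot - 1) := by
  have hF := eq_X_pow_mul_shift_add_trunc M F
  set S := mk fun i ↦ coeff (i + M) F
  refine ⟨(1 - X * kernelRoot) * (kernelRoot - 1) * prefixWeightSum kernelRoot M -
    X * (kernelRoot - 1) * kernelRoot ^ M - X * kernelRoot * (1 - X * kernelRoot) * S, ?_⟩
  linear_combination -(1 - X * kernelRoot) * kernelRoot_telescope M +
    X * (kernelRoot - 1) * mul_neg_geom_sum (X * kernelRoot) M -
    X * kernelRoot * (1 - X * kernelRoot) * hF

lemma one_sub_X_mul_kernelRoot_mul_F : (1 - X * kernelRoot) * F = 1 := by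
  have hdefect : (1 - X * kernelRoot) * (kernelRoot - 1 - X * kernelRoot * F) -
      X * (kernelRoot - 1) = 0 := by
    ext k
    exact X_pow_dvd_iff.1 (X_pow_dvd_kernel_defect (k + 1)) k (Nat.lt_succ_self k)
  have hroot : kernelRoot ≠ 0 := fun h ↦ by
    simpa [kernelRoot, kernelRootCoeff] using congrArg constantCoeff h
  refine (mul_right_inj' (mul_ne_zero X_ne_zero hroot)).1 ?_
  linear_combination -hdefect - X_mul_kernelRoot

theorem stmt :
    (1 + PowerSeries.X - 2 * PowerSeries.X * (2 - PowerSeries.X) * F) ^ 2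
      = 1 - 6 * PowerSeries.X + 5 * PowerSeries.X ^ 2 := by
  have hF : (2 - X) * F = 1 + kernelRoot := by
    linear_combination (1 + kernelRoot) * one_sub_X_mul_kernelRoot_mul_F + F * X_mul_kernelRoot
  rw [mul_assoc (2 * X), hF]
  linear_combination 4 * X * X_mul_kernelRoot
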